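/- Let H₀ be the set of real 4×4 matrices N(v,a) := [[v,0,0,0],[0,v,a,a²/(2v)],[0,0,1,a/v],[0,0,0,1/v]] with v > 0 and a ∈ ℝ, and let G₂ be the set of real 3×3 matrices g(u,x) := [[u,0,0],[x,√u,0],[x,0,√u]] with u > 0 and x ∈ ℝ. Then H₀ is a subgroup of GL(4,ℝ), G₂ is a subgroup of GL(3,ℝ), and the map N(v,a) ↦ g(v^{−2}, a·v^{−2}) is a group isomorphism from H₀ onto G₂. In particular, H₀ and G₂ are isomorphic two-dimensional Lie groups (each isomorphic to the affine group of the real line). -/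

import Mathlib

open Matrix

/-- The matrix `N(v,a) = [[v,0,0,0],[0,v,a,a²/(2v)],[0,0,1,a/v],[0,0,0,1/v]]`. -/
noncomputable def Nmat (v a : ℝ) : Matrix (Fin 4) (Fin 4) ℝ :=
  !![v, 0, 0, 0;
     0, v, a, a ^ 2 / (2 * v);
     0, 0, 1, a / v;
     0, 0, 0, 1 / v]

/-- The matrix `g(u,x) = [[u,0,0],[x,√u,0],[x,0,√u]]`. -/
noncomputable def gmat (u x : ℝ) : Matrix (Fin 3) (Fin 3) ℝ :=
  !![u, 0, 0;
     x, Real.sqrt u, 0;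
     x, 0, Real.sqrt u]

/-- The isotropy group `H₀ = {N(v,a) : v > 0, a ∈ ℝ}`. -/
noncomputable def H₀ : Set (Matrix (Fin 4) (Fin 4) ℝ) :=
  {M | ∃ v a : ℝ, 0 < v ∧ M = Nmat v a}

/-- The structure group `G₂ = {g(u,x) : u > 0, x ∈ ℝ}`. -/
noncomputable def G₂ : Set (Matrix (Fin 3) (Fin 3) ℝ) :=
  {M | ∃ u x : ℝ, 0 < u ∧ M = gmat u x}

/-!
Both groups are copies of the affine group of the line: the multiplication laws are
`N(v,a) N(w,b) = N(vw, a + v b)` and `g(u,x) g(w,y) = g(uw, x w + √u y)`. Substituting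
`u = v⁻²`, `x = a v⁻²` turns the second law into the first, and the substitution is inverted by
`g(u,x) ↦ N(u^{-1/2}, x/u)`.
-/

lemma Matrix.isUnit_and_inv_mem_of_mul_eq_one {n R : Type*} [Fintype n] [DecidableEq n]
    [CommRing R] {S : Set (Matrix n n R)} {A B : Matrix n n R} (h : A * B = 1) (hB : B ∈ S) :
    IsUnit A ∧ A⁻¹ ∈ S :=
  ⟨IsUnit.of_mul_eq_one B h, by rwa [Matrix.inv_eq_right_inv h]⟩

lemma Nmat_mul {v w : ℝ} (a b : ℝ) (hv : v ≠ 0) (hw : w ≠ 0) :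
    Nmat v a * Nmat w b = Nmat (v * w) (a + v * b) := by
  ext i j
  fin_cases i <;> fin_cases j <;>
    simp [Nmat, Matrix.mul_apply, Fin.sum_univ_four] <;> field_simp <;> ring

lemma Nmat_one_zero : Nmat 1 0 = 1 := by
  ext i j
  fin_cases i <;> fin_cases j <;> simp [Nmat]

lemma Nmat_mul_Nmat_inv {v : ℝ} (a : ℝ) (hv : v ≠ 0) : Nmat v a * Nmat v⁻¹ (-(a / v)) = 1 := by
  rw [Nmat_mul a _ hv (inv_ne_zero hv), mul_inv_cancel₀ hv, mul_neg, mul_div_cancel₀ a hv,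
    add_neg_cancel, Nmat_one_zero]

lemma one_mem_H₀ : (1 : Matrix (Fin 4) (Fin 4) ℝ) ∈ H₀ :=
  ⟨1, 0, one_pos, Nmat_one_zero.symm⟩

lemma mul_mem_H₀ {A B : Matrix (Fin 4) (Fin 4) ℝ} (hA : A ∈ H₀) (hB : B ∈ H₀) : A * B ∈ H₀ := by
  obtain ⟨v, a, hv, rfl⟩ := hA
  obtain ⟨w, b, hw, rfl⟩ := hB
  exact ⟨v * w, a + v * b, mul_pos hv hw, Nmat_mul a b hv.ne' hw.ne'⟩

lemma isUnit_and_inv_mem_H₀ {A : Matrix (Fin 4) (Fin 4) ℝ} (hA : A ∈ H₀) :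
    IsUnit A ∧ A⁻¹ ∈ H₀ := by
  obtain ⟨v, a, hv, rfl⟩ := hA
  exact Matrix.isUnit_and_inv_mem_of_mul_eq_one (Nmat_mul_Nmat_inv a hv.ne')
    ⟨v⁻¹, -(a / v), inv_pos.2 hv, rfl⟩

lemma gmat_mul {u : ℝ} (x w y : ℝ) (hu : 0 ≤ u) :
    gmat u x * gmat w y = gmat (u * w) (x * w + √u * y) := by
  ext i j
  fin_cases i <;> fin_cases j <;>
    simp [gmat, Matrix.mul_apply, Fin.sum_univ_three, Real.sqrt_mul hu]

lemma gmat_one_zero : gmat 1 0 = 1 := by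
  ext i j
  fin_cases i <;> fin_cases j <;> simp [gmat]

lemma gmat_mul_gmat_inv {u : ℝ} (x : ℝ) (hu : 0 < u) :
    gmat u x * gmat u⁻¹ (-(x / (u * √u))) = 1 := by
  have hs : √u ≠ 0 := (Real.sqrt_pos.2 hu).ne'
  have hx : x * u⁻¹ + √u * -(x / (u * √u)) = 0 := by
    field_simp
    ring
  rw [gmat_mul x _ _ hu.le, mul_inv_cancel₀ hu.ne', hx, gmat_one_zero]

lemma one_mem_G₂ : (1 : Matrix (Fin 3) (Fin 3) ℝ) ∈ G₂ :=
  ⟨1, 0, one_pos, gmat_one_zero.symm⟩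

lemma mul_mem_G₂ {A B : Matrix (Fin 3) (Fin 3) ℝ} (hA : A ∈ G₂) (hB : B ∈ G₂) : A * B ∈ G₂ := by
  obtain ⟨u, x, hu, rfl⟩ := hA
  obtain ⟨w, y, hw, rfl⟩ := hB
  exact ⟨u * w, x * w + √u * y, mul_pos hu hw, gmat_mul x w y hu.le⟩

lemma isUnit_and_inv_mem_G₂ {A : Matrix (Fin 3) (Fin 3) ℝ} (hA : A ∈ G₂) :
    IsUnit A ∧ A⁻¹ ∈ G₂ := by
  obtain ⟨u, x, hu, rfl⟩ := hA
  exact Matrix.isUnit_and_inv_mem_of_mul_eq_one (gmat_mul_gmat_inv x hu)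
    ⟨u⁻¹, -(x / (u * √u)), inv_pos.2 hu, rfl⟩

/-- Defined on all matrices by reading the parameters off matrix entries; only the values on
`H₀` (resp. `G₂` for `G₂ToH₀`) matter. -/
noncomputable def H₀ToG₂ (M : Matrix (Fin 4) (Fin 4) ℝ) : Matrix (Fin 3) (Fin 3) ℝ :=
  gmat (M 0 0 ^ 2)⁻¹ (M 1 2 * (M 0 0 ^ 2)⁻¹)

noncomputable def G₂ToH₀ (M : Matrix (Fin 3) (Fin 3) ℝ) : Matrix (Fin 4) (Fin 4) ℝ :=
  Nmat (√(M 0 0))⁻¹ (M 1 0 / M 0 0)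

lemma H₀ToG₂_Nmat (v a : ℝ) : H₀ToG₂ (Nmat v a) = gmat (v ^ 2)⁻¹ (a * (v ^ 2)⁻¹) := by
  simp [H₀ToG₂, Nmat]

lemma G₂ToH₀_gmat (u x : ℝ) : G₂ToH₀ (gmat u x) = Nmat (√u)⁻¹ (x / u) := by
  simp [G₂ToH₀, gmat]

lemma mapsTo_H₀ToG₂ : Set.MapsTo H₀ToG₂ H₀ G₂ := by
  rintro _ ⟨v, a, hv, rfl⟩
  exact ⟨(v ^ 2)⁻¹, a * (v ^ 2)⁻¹, by positivity, H₀ToG₂_Nmat v a⟩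

lemma mapsTo_G₂ToH₀ : Set.MapsTo G₂ToH₀ G₂ H₀ := by
  rintro _ ⟨u, x, hu, rfl⟩
  exact ⟨(√u)⁻¹, x / u, by positivity, G₂ToH₀_gmat u x⟩

lemma invOn_G₂ToH₀_H₀ToG₂ : Set.InvOn G₂ToH₀ H₀ToG₂ H₀ G₂ := by
  constructor
  · rintro _ ⟨v, a, hv, rfl⟩
    have hv2 : (v ^ 2)⁻¹ ≠ 0 := by positivity
    rw [H₀ToG₂_Nmat, G₂ToH₀_gmat, Real.sqrt_inv, Real.sqrt_sq hv.le, inv_inv,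
      mul_div_cancel_right₀ a hv2]
  · rintro _ ⟨u, x, hu, rfl⟩
    rw [G₂ToH₀_gmat, H₀ToG₂_Nmat, inv_pow, Real.sq_sqrt hu.le, inv_inv,
      div_mul_cancel₀ x hu.ne']

lemma H₀ToG₂_mul {A B : Matrix (Fin 4) (Fin 4) ℝ} (hA : A ∈ H₀) (hB : B ∈ H₀) :
    H₀ToG₂ (A * B) = H₀ToG₂ A * H₀ToG₂ B := by
  obtain ⟨v, a, hv, rfl⟩ := hA
  obtain ⟨w, b, hw, rfl⟩ := hB
  have hsqrt : √((v ^ 2)⁻¹) = v⁻¹ := by rw [Real.sqrt_inv, Real.sqrt_sq hv.le]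
  rw [Nmat_mul a b hv.ne' hw.ne', H₀ToG₂_Nmat, H₀ToG₂_Nmat, H₀ToG₂_Nmat,
    gmat_mul _ _ _ (by positivity), hsqrt]
  congr 1
  · ring
  · field_simp

/-- `H₀` and `G₂` are subgroups of `GL(4,ℝ)` and `GL(3,ℝ)` respectively, and
`N(v,a) ↦ g(v⁻², a·v⁻²)` is a group isomorphism from `H₀` onto `G₂`. -/
theorem H₀_isomorphic_to_G₂ :
    ((1 : Matrix (Fin 4) (Fin 4) ℝ) ∈ H₀ ∧
      (∀ A ∈ H₀, ∀ B ∈ H₀, A * B ∈ H₀) ∧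
      (∀ A ∈ H₀, IsUnit A ∧ A⁻¹ ∈ H₀)) ∧
    ((1 : Matrix (Fin 3) (Fin 3) ℝ) ∈ G₂ ∧
      (∀ A ∈ G₂, ∀ B ∈ G₂, A * B ∈ G₂) ∧
      (∀ A ∈ G₂, IsUnit A ∧ A⁻¹ ∈ G₂)) ∧
    (∃ φ : Matrix (Fin 4) (Fin 4) ℝ → Matrix (Fin 3) (Fin 3) ℝ,
      (∀ v a : ℝ, 0 < v → φ (Nmat v a) = gmat (v ^ 2)⁻¹ (a * (v ^ 2)⁻¹)) ∧
      Set.BijOn φ H₀ G₂ ∧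
      (∀ A ∈ H₀, ∀ B ∈ H₀, φ (A * B) = φ A * φ B)) :=
  ⟨⟨one_mem_H₀, fun _ hA _ hB => mul_mem_H₀ hA hB, fun _ => isUnit_and_inv_mem_H₀⟩,
    ⟨one_mem_G₂, fun _ hA _ hB => mul_mem_G₂ hA hB, fun _ => isUnit_and_inv_mem_G₂⟩,
    H₀ToG₂, fun v a _ => H₀ToG₂_Nmat v a,
    invOn_G₂ToH₀_H₀ToG₂.bijOn mapsTo_H₀ToG₂ mapsTo_G₂ToH₀,
    fun _ hA _ hB => H₀ToG₂_mul hA hB⟩
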